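/- arXiv:1205.2036 — 8 statements merged into one kernel-verified Lean document; each statement's English description precedes it below -/
import Mathlib

section
/- Let g be a weak hyperation of a normal function f. Then: (1) if ξ < ζ then g ξ α ≤ g ζ α for every ordinal α; (2) if ξ + ζ = ζ then g ξ ∘ g ζ = g ζ (so every value of g ζ is a fixed point of g ξ); (3) if η < ω^ρ then g η (g (ω^ρ) ξ + 1) ≤ g (ω^ρ) (ξ + 1) for every ordinal ξ. -/
open Ordinal

/-- An ordinal function is *initial* if it maps every initial segment onto an initial segment. -/
def Initial (g : Ordinal → Ordinal) : Prop :=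
  ∀ β : Ordinal, ∃ γ : Ordinal, g '' {α | α < β} = {α | α < γ}

/-- A *weak hyperation* of a normal function `f`. -/
def WeakHyperation (f : Ordinal → Ordinal) (g : Ordinal → Ordinal → Ordinal) : Prop :=
  (∀ ξ : Ordinal, Order.IsNormal (g ξ)) ∧ g 0 = id ∧ g 1 = f ∧
    ∀ ξ ζ : Ordinal, g (ξ + ζ) = g ξ ∘ g ζ

/-- `F` is *the hyperation* of `f`: the pointwise minimal weak hyperation. -/
def IsHyperation (f : Ordinal → Ordinal) (F : Ordinal → Ordinal → Ordinal) : Prop :=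
  WeakHyperation f F ∧
    ∀ h : Ordinal → Ordinal → Ordinal, WeakHyperation f h → ∀ ξ ζ : Ordinal, F ξ ζ ≤ h ξ ζ

/-- A *weak cohyperation* of an initial function `f`. -/
def WeakCohyperation (f : Ordinal → Ordinal) (g : Ordinal → Ordinal → Ordinal) : Prop :=
  (∀ ξ : Ordinal, Initial (g ξ)) ∧ g 0 = id ∧ g 1 = f ∧
    ∀ ξ ζ : Ordinal, g (ξ + ζ) = g ζ ∘ g ξ

/-- `G` is *the cohyperation* of `f`: the pointwise maximal weak cohyperation. -/
def IsCohyperation (f : Ordinal → Ordinal) (G : Ordinal → Ordinal → Ordinal) : Prop :=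
  WeakCohyperation f G ∧
    ∀ h : Ordinal → Ordinal → Ordinal, WeakCohyperation f h → ∀ ξ α : Ordinal, h ξ α ≤ G ξ α

/-- `g` is a *left adjoint* of `f`. -/
def LeftAdjoint (f g : Ordinal → Ordinal) : Prop :=
  ∀ α β : Ordinal, (α = f β → g α = β) ∧ (α < f β → g α < β)


/- Everything follows from the composition law. Writing `ζ = ξ + (ζ - ξ)` gives
`g ζ = g ξ ∘ g (ζ - ξ) ≥ g ξ`, as normal functions are inflationary; and
`η + ω ^ ρ = ω ^ ρ` for `η < ω ^ ρ`, so `g η` fixes every value of `g (ω ^ ρ)`. -/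

namespace WeakHyperation

variable {f : Ordinal → Ordinal} {g : Ordinal → Ordinal → Ordinal}

theorem apply_le_apply_of_le (hg : WeakHyperation f g) {ξ ζ : Ordinal} (h : ξ ≤ ζ)
    (α : Ordinal) : g ξ α ≤ g ζ α := by
  obtain ⟨hnormal, -, -, hadd⟩ := hg
  rw [← Ordinal.add_sub_cancel_of_le h, hadd]
  exact (hnormal ξ).strictMono.monotone (hnormal (ζ - ξ)).strictMono.le_apply

theorem comp_eq_of_add_eq (hg : WeakHyperation f g) {ξ ζ : Ordinal} (h : ξ + ζ = ζ) :
    g ξ ∘ g ζ = g ζ := by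
  rw [← hg.2.2.2, h]

theorem comp_omega0_opow (hg : WeakHyperation f g) {η ρ : Ordinal} (h : η < ω ^ ρ) :
    g η ∘ g (ω ^ ρ) = g (ω ^ ρ) :=
  hg.comp_eq_of_add_eq (Ordinal.add_omega0_opow h)

theorem apply_add_one_le_apply_add_one (hg : WeakHyperation f g) (ξ α : Ordinal) :
    g ξ α + 1 ≤ g ξ (α + 1) :=
  Order.add_one_le_of_lt ((hg.1 ξ).strictMono (lt_add_one α))

end WeakHyperation

theorem weakHyperation_properties_general (f : Ordinal → Ordinal)
    (g : Ordinal → Ordinal → Ordinal) (hg : WeakHyperation f g) :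
    (∀ ξ ζ α : Ordinal, ξ < ζ → g ξ α ≤ g ζ α) ∧
    (∀ ξ ζ : Ordinal, ξ + ζ = ζ → g ξ ∘ g ζ = g ζ) ∧
    (∀ η ρ ξ : Ordinal, η < Ordinal.omega0 ^ ρ →
      g η (g (Ordinal.omega0 ^ ρ) ξ + 1) ≤ g (Ordinal.omega0 ^ ρ) (ξ + 1)) := by
  refine ⟨fun ξ ζ α h => hg.apply_le_apply_of_le h.le α,
    fun ξ ζ h => hg.comp_eq_of_add_eq h, fun η ρ ξ h => ?_⟩
  calc g η (g (ω ^ ρ) ξ + 1)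
      ≤ g η (g (ω ^ ρ) (ξ + 1)) :=
        (hg.1 η).strictMono.monotone (hg.apply_add_one_le_apply_add_one _ ξ)
    _ = g (ω ^ ρ) (ξ + 1) := congrFun (hg.comp_omega0_opow h) (ξ + 1)

theorem weakHyperation_properties (f : Ordinal → Ordinal) (hf : Order.IsNormal f)
    (g : Ordinal → Ordinal → Ordinal) (hg : WeakHyperation f g) :
    (∀ ξ ζ α : Ordinal, ξ < ζ → g ξ α ≤ g ζ α) ∧
    (∀ ξ ζ : Ordinal, ξ + ζ = ζ → g ξ ∘ g ζ = g ζ) ∧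
    (∀ η ρ ξ : Ordinal, η < Ordinal.omega0 ^ ρ →
      g η (g (Ordinal.omega0 ^ ρ) ξ + 1) ≤ g (Ordinal.omega0 ^ ρ) (ξ + 1)) :=
  weakHyperation_properties_general f g hg
end

section
/- Let f be a normal function and let g : Ordinal → Ordinal → Ordinal be a family of normal functions satisfying: (a) g 0 is the identity; (b) g 1 = f; (c) g (ω^ρ + ξ) = g (ω^ρ) ∘ g ξ whenever ξ < ω^ρ + ξ; (d) g (ω^δ) ∘ g (ω^ρ) = g (ω^ρ) whenever ω^δ < ω^ρ. Then g is a weak hyperation of f, i.e., g (ξ + ζ) = g ξ ∘ g ζ holds for all ordinals ξ, ζ. -/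
open Ordinal

/-!
Writing a nonzero `ξ` as `ω ^ log ω ξ + ξ'` with `ξ' < ξ`, induction on `ξ` reduces the claim to
`g (ω ^ ρ + η) = g (ω ^ ρ) ∘ g η` for all `ρ, η`. If `ω ^ ρ` does not absorb `η` this is (c).
If `ω ^ ρ + η = η`, then `ω ^ (ρ + 1) ≤ η`, so `η = ω ^ σ + η'` with `ρ < σ`, and by (c) and (d)
`g (ω ^ ρ) ∘ g η = g (ω ^ ρ) ∘ g (ω ^ σ) ∘ g η' = g (ω ^ σ) ∘ g η' = g η`.
-/

theorem Ordinal.omega0_opow_log_add_sub {ξ : Ordinal} (hξ : ξ ≠ 0) :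
    ω ^ log ω ξ + (ξ - ω ^ log ω ξ) = ξ :=
  Ordinal.add_sub_cancel_of_le (opow_log_le_self _ hξ)

theorem Ordinal.lt_log_of_omega0_opow_add_eq {ρ η : Ordinal} (h : ω ^ ρ + η = η) :
    ρ < log ω η := by
  have hη : η ≠ 0 := by
    rintro rfl
    simp at h
  rw [add_eq_right_iff_mul_omega0_le, ← opow_succ, opow_le_iff_le_log one_lt_omega0 hη] at h
  exact Order.succ_le_iff.1 h

section

variable {g : Ordinal → Ordinal → Ordinal}

theorem comp_eq_of_omega0_opow_add_eq
    (hc : ∀ ρ ξ : Ordinal, ξ < ω ^ ρ + ξ → g (ω ^ ρ + ξ) = g (ω ^ ρ) ∘ g ξ)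
    (hd : ∀ δ ρ : Ordinal, ω ^ δ < ω ^ ρ → g (ω ^ δ) ∘ g (ω ^ ρ) = g (ω ^ ρ))
    {ρ η : Ordinal} (h : ω ^ ρ + η = η) : g (ω ^ ρ) ∘ g η = g η := by
  have hlog := lt_log_of_omega0_opow_add_eq h
  have hη : η ≠ 0 := fun h0 ↦ by simp [h0] at hlog
  have hsplit := omega0_opow_log_add_sub hη
  have hlead := hc (log ω η) (η - ω ^ log ω η) (by rw [hsplit]; exact sub_omega0_opow_log_lt hη)
  rw [hsplit] at hlead
  rw [hlead, ← Function.comp_assoc,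
    hd ρ _ ((opow_lt_opow_iff_right one_lt_omega0).2 hlog)]

theorem apply_omega0_opow_add
    (hc : ∀ ρ ξ : Ordinal, ξ < ω ^ ρ + ξ → g (ω ^ ρ + ξ) = g (ω ^ ρ) ∘ g ξ)
    (hd : ∀ δ ρ : Ordinal, ω ^ δ < ω ^ ρ → g (ω ^ δ) ∘ g (ω ^ ρ) = g (ω ^ ρ))
    (ρ η : Ordinal) : g (ω ^ ρ + η) = g (ω ^ ρ) ∘ g η := by
  rcases (le_add_self : η ≤ ω ^ ρ + η).lt_or_eq with hlt | habs
  · exact hc ρ η hlt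
  · rw [← habs, comp_eq_of_omega0_opow_add_eq hc hd habs.symm]

theorem apply_add_of_apply_omega0_opow_add (h0 : g 0 = id)
    (hadd : ∀ ρ η : Ordinal, g (ω ^ ρ + η) = g (ω ^ ρ) ∘ g η) (ξ ζ : Ordinal) :
    g (ξ + ζ) = g ξ ∘ g ζ := by
  induction ξ using WellFoundedLT.induction with
  | ind ξ IH =>
    rcases eq_or_ne ξ 0 with rfl | hξ
    · simp [h0]
    have hsplit := omega0_opow_log_add_sub hξ
    calc g (ξ + ζ) = g (ω ^ log ω ξ + ((ξ - ω ^ log ω ξ) + ζ)) := by rw [← add_assoc, hsplit]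
      _ = g (ω ^ log ω ξ) ∘ g (ξ - ω ^ log ω ξ) ∘ g ζ := by
        rw [hadd, IH _ (sub_omega0_opow_log_lt hξ)]
      _ = g ξ ∘ g ζ := by rw [← Function.comp_assoc, ← hadd, hsplit]

end

theorem weakHyperation_of_special_cases_general (f : Ordinal → Ordinal)
    (g : Ordinal → Ordinal → Ordinal)
    (hnorm : ∀ ξ : Ordinal, Order.IsNormal (g ξ))
    (h0 : g 0 = id) (h1 : g 1 = f)
    (hc : ∀ ρ ξ : Ordinal, ξ < Ordinal.omega0 ^ ρ + ξ →
      g (Ordinal.omega0 ^ ρ + ξ) = g (Ordinal.omega0 ^ ρ) ∘ g ξ)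
    (hd : ∀ δ ρ : Ordinal, Ordinal.omega0 ^ δ < Ordinal.omega0 ^ ρ →
      g (Ordinal.omega0 ^ δ) ∘ g (Ordinal.omega0 ^ ρ) = g (Ordinal.omega0 ^ ρ)) :
    WeakHyperation f g :=
  ⟨hnorm, h0, h1, apply_add_of_apply_omega0_opow_add h0 (apply_omega0_opow_add hc hd)⟩

theorem weakHyperation_of_special_cases (f : Ordinal → Ordinal) (hf : Order.IsNormal f)
    (g : Ordinal → Ordinal → Ordinal)
    (hnorm : ∀ ξ : Ordinal, Order.IsNormal (g ξ))
    (h0 : g 0 = id) (h1 : g 1 = f)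
    (hc : ∀ ρ ξ : Ordinal, ξ < Ordinal.omega0 ^ ρ + ξ →
      g (Ordinal.omega0 ^ ρ + ξ) = g (Ordinal.omega0 ^ ρ) ∘ g ξ)
    (hd : ∀ δ ρ : Ordinal, Ordinal.omega0 ^ δ < Ordinal.omega0 ^ ρ →
      g (Ordinal.omega0 ^ δ) ∘ g (Ordinal.omega0 ^ ρ) = g (Ordinal.omega0 ^ ρ)) :
    WeakHyperation f g :=
  weakHyperation_of_special_cases_general f g hnorm h0 h1 hc hd
end

section
/- Let f be a normal function and F its hyperation. Then F satisfies the following recursion at additively indecomposable indices: for every ordinal ρ > 0, (i) F (ω^ρ) 0 = sup_{ζ<ω^ρ} F ζ 0; (ii) F (ω^ρ) (ξ + 1) = sup_{ζ<ω^ρ} F ζ (F (ω^ρ) ξ + 1) for every ordinal ξ; and (iii) F (ω^ρ) λ = sup_{ξ<λ} F (ω^ρ) ξ for every limit ordinal λ. -/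
open Ordinal

/-!
Composing along Cantor normal forms, `ω ^ e₁ + ⋯ + ω ^ eₖ ↦ Q e₁ ∘ ⋯ ∘ Q eₖ`, turns any family of
normal functions with `Q τ ∘ Q σ = Q σ` for `τ < σ` into a weak hyperation of `Q 0`.

Let `F` be a weak hyperation and `G` the function defined by the recursion (i)–(iii). Since
`F ζ ∘ F (ω ^ ρ) = F (ζ + ω ^ ρ) = F (ω ^ ρ)` for `ζ < ω ^ ρ`, an induction gives
`G ≤ F (ω ^ ρ)`. On the other hand `G` is normal, its values are fixed by every `F ζ` with
`ζ < ω ^ ρ`, and (being squeezed between the identity and `F (ω ^ ρ)`) it fixes the values of every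
`F (ω ^ σ)` with `σ > ρ`. So putting `G` in place of `F (ω ^ ρ)` in the family `σ ↦ F (ω ^ σ)`
yields a weak hyperation, and minimality of the hyperation gives `F (ω ^ ρ) ≤ G`. Clause (iii) is
just the continuity of `F (ω ^ ρ)`.
-/

open Ordinal Set Order

universe u v

section CantorComp

variable {α : Type*}

/-- `cantorComp Q ξ = Q e₁ ∘ ⋯ ∘ Q eₖ`, where `ξ = ω ^ e₁ + ⋯ + ω ^ eₖ` with `e₁ ≥ ⋯ ≥ eₖ` is the
Cantor normal form of `ξ`. -/
noncomputable def cantorComp (Q : Ordinal → α → α) (ξ : Ordinal) : α → α :=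
  if h : ξ = 0 then id
  else
    have := sub_omega0_opow_log_lt h
    Q (log ω ξ) ∘ cantorComp Q (ξ - ω ^ log ω ξ)
termination_by ξ

variable (Q : Ordinal → α → α)

@[simp]
theorem cantorComp_zero : cantorComp Q 0 = id := by
  rw [cantorComp, dif_pos rfl]

theorem cantorComp_of_ne_zero {ξ : Ordinal} (hξ : ξ ≠ 0) :
    cantorComp Q ξ = Q (log ω ξ) ∘ cantorComp Q (ξ - ω ^ log ω ξ) := by
  rw [cantorComp, dif_neg hξ]

theorem cantorComp_opow_add {e c : Ordinal} (hc : c < ω ^ succ e) :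
    cantorComp Q (ω ^ e + c) = Q e ∘ cantorComp Q c := by
  have hne : ω ^ e + c ≠ 0 := (add_pos_of_pos_of_nonneg (opow_pos e omega0_pos) zero_le).ne'
  have hlog : log ω (ω ^ e + c) = e := by
    rw [log_eq_iff one_lt_omega0 hne, ← succ_eq_add_one]
    have he : ω ^ e < ω ^ succ e := (opow_lt_opow_iff_right one_lt_omega0).2 (lt_succ e)
    exact ⟨le_self_add, isPrincipal_add_omega0_opow _ he hc⟩
  rw [cantorComp_of_ne_zero Q hne, hlog, Ordinal.add_sub_cancel]

@[simp]
theorem cantorComp_opow (e : Ordinal) : cantorComp Q (ω ^ e) = Q e := by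
  simpa using cantorComp_opow_add Q (opow_pos (succ e) omega0_pos)

theorem cantorComp_one : cantorComp Q 1 = Q 0 := by
  simpa using cantorComp_opow Q 0

variable {Q}

theorem isNormal_cantorComp [LinearOrder α] (hQ : ∀ σ, IsNormal (Q σ)) (ξ : Ordinal) :
    IsNormal (cantorComp Q ξ) := by
  induction ξ using WellFoundedLT.induction with
  | _ ξ IH =>
    rcases eq_or_ne ξ 0 with rfl | hξ
    · simpa using IsNormal.id
    · rw [cantorComp_of_ne_zero Q hξ]
      exact (hQ _).comp (IH _ (sub_omega0_opow_log_lt hξ))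

theorem cantorComp_comp_of_lt_opow {σ : Ordinal} (hQ : ∀ τ < σ, Q τ ∘ Q σ = Q σ) {ζ : Ordinal}
    (hζ : ζ < ω ^ σ) : cantorComp Q ζ ∘ Q σ = Q σ := by
  induction ζ using WellFoundedLT.induction with
  | _ ζ IH =>
    rcases eq_or_ne ζ 0 with rfl | hζ0
    · simp
    · rw [cantorComp_of_ne_zero Q hζ0, Function.comp_assoc,
        IH _ (sub_omega0_opow_log_lt hζ0) ((sub_le_self _ _).trans_lt hζ),
        hQ _ ((lt_opow_iff_log_lt one_lt_omega0 hζ0).1 hζ)]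

theorem cantorComp_add (hQ : ∀ τ σ, τ < σ → Q τ ∘ Q σ = Q σ) (a b : Ordinal) :
    cantorComp Q (a + b) = cantorComp Q a ∘ cantorComp Q b := by
  induction a using WellFoundedLT.induction with
  | _ a IH =>
    rcases eq_or_ne b 0 with rfl | hb
    · simp
    rcases lt_or_ge a (ω ^ log ω b) with hab | hba
    · rw [add_of_omega0_opow_le hab (opow_log_le_self ω hb), cantorComp_of_ne_zero Q hb,
        ← Function.comp_assoc, cantorComp_comp_of_lt_opow (hQ · _) hab]
    · have ha : a ≠ 0 := ((opow_pos _ omega0_pos).trans_le hba).ne'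
      set e := log ω a
      set a' := a - ω ^ e
      have ha' : ω ^ e + a' = a := Ordinal.add_sub_cancel_of_le (opow_log_le_self ω ha)
      have ha'_lt : a' < ω ^ succ e :=
        (sub_le_self _ _).trans_lt (lt_opow_succ_log_self one_lt_omega0 a)
      have hb_lt : b < ω ^ succ e :=
        (lt_opow_succ_log_self one_lt_omega0 b).trans_le <| opow_le_opow_right omega0_pos <|
          succ_le_succ ((opow_le_iff_le_log one_lt_omega0 ha).1 hba)
      rw [← ha', add_assoc, cantorComp_opow_add Q (isPrincipal_add_omega0_opow _ ha'_lt hb_lt),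
        IH a' (sub_omega0_opow_log_lt ha), cantorComp_opow_add Q ha'_lt]
      rfl

theorem weakHyperation_cantorComp {Q : Ordinal.{v} → Ordinal.{u} → Ordinal.{u}}
    (hN : ∀ σ, IsNormal (Q σ)) (hQ : ∀ τ σ, τ < σ → Q τ ∘ Q σ = Q σ) :
    WeakHyperation (Q 0) (cantorComp Q) :=
  ⟨isNormal_cantorComp hN, cantorComp_zero Q, cantorComp_one Q, cantorComp_add hQ⟩

end CantorComp

section Hyperation

variable {f : Ordinal.{u} → Ordinal.{u}} {F : Ordinal.{v} → Ordinal.{u} → Ordinal.{u}}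

theorem WeakHyperation.isNormal (hF : WeakHyperation f F) (ξ : Ordinal) : IsNormal (F ξ) :=
  hF.1 ξ

theorem WeakHyperation.map_zero (hF : WeakHyperation f F) : F 0 = id :=
  hF.2.1

theorem WeakHyperation.map_one (hF : WeakHyperation f F) : F 1 = f :=
  hF.2.2.1

theorem WeakHyperation.map_add (hF : WeakHyperation f F) (ξ ζ : Ordinal) :
    F (ξ + ζ) = F ξ ∘ F ζ :=
  hF.2.2.2 ξ ζ

theorem WeakHyperation.comp_of_lt_opow (hF : WeakHyperation f F) {ζ σ : Ordinal}
    (hζ : ζ < ω ^ σ) : F ζ ∘ F (ω ^ σ) = F (ω ^ σ) := by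
  rw [← hF.map_add, add_omega0_opow hζ]

theorem WeakHyperation.apply_le_of_lt_opow (hF : WeakHyperation f F) {ζ σ : Ordinal}
    (hζ : ζ < ω ^ σ) {x y : Ordinal} (hxy : x ≤ F (ω ^ σ) y) : F ζ x ≤ F (ω ^ σ) y :=
  calc F ζ x ≤ F ζ (F (ω ^ σ) y) := (hF.isNormal ζ).monotone hxy
    _ = F (ω ^ σ) y := congrFun (hF.comp_of_lt_opow hζ) y

noncomputable def supBelow (F : Ordinal.{v} → Ordinal.{u} → Ordinal.{u}) (o : Ordinal.{v})
    (x : Ordinal.{u}) : Ordinal.{u} :=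
  ⨆ ζ : Iio o, F ζ.1 x

theorem WeakHyperation.bddAbove_range_apply (hF : WeakHyperation f F) (ρ x : Ordinal) :
    BddAbove (range fun ζ : Iio (ω ^ ρ) => F ζ.1 x) :=
  ⟨F (ω ^ ρ) x, by
    rintro _ ⟨ζ, rfl⟩
    exact hF.apply_le_of_lt_opow ζ.2 (hF.isNormal _).strictMono.le_apply⟩

theorem WeakHyperation.supBelow_le (hF : WeakHyperation f F) {ρ : Ordinal} {x y : Ordinal}
    (hxy : x ≤ F (ω ^ ρ) y) : supBelow F (ω ^ ρ) x ≤ F (ω ^ ρ) y :=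
  ciSup_le' fun ζ => hF.apply_le_of_lt_opow ζ.2 hxy

theorem WeakHyperation.le_supBelow (hF : WeakHyperation f F) (ρ : Ordinal) (x : Ordinal) :
    x ≤ supBelow F (ω ^ ρ) x :=
  calc x = F 0 x := by rw [hF.map_zero, id]
    _ ≤ supBelow F (ω ^ ρ) x :=
      le_ciSup (hF.bddAbove_range_apply ρ x) ⟨0, opow_pos ρ omega0_pos⟩

theorem WeakHyperation.apply_supBelow (hF : WeakHyperation f F) {ζ ρ : Ordinal}
    (hζ : ζ < ω ^ ρ) (x : Ordinal) : F ζ (supBelow F (ω ^ ρ) x) = supBelow F (ω ^ ρ) x := by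
  have : Nonempty (Iio (ω ^ ρ)) := ⟨⟨0, opow_pos ρ omega0_pos⟩⟩
  have hbdd := hF.bddAbove_range_apply ρ x
  refine le_antisymm ?_ (hF.isNormal ζ).strictMono.le_apply
  rw [supBelow, (hF.isNormal ζ).map_iSup hbdd]
  refine ciSup_le' fun ζ' => ?_
  have hsum : ζ + ζ'.1 < ω ^ ρ := isPrincipal_add_omega0_opow ρ hζ ζ'.2
  calc F ζ (F ζ'.1 x) = F (ζ + ζ'.1) x := by rw [hF.map_add]; rfl
    _ ≤ supBelow F (ω ^ ρ) x := le_ciSup hbdd ⟨_, hsum⟩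

noncomputable def hyperationRec (F : Ordinal.{v} → Ordinal.{u} → Ordinal.{u}) (ρ : Ordinal.{v})
    (α : Ordinal.{u}) : Ordinal.{u} :=
  limitRecOn α (supBelow F (ω ^ ρ) 0) (fun _ G => supBelow F (ω ^ ρ) (G + 1))
    (fun l _ G => ⨆ β : Iio l, G β.1 β.2)

variable (F) (ρ : Ordinal.{v})

theorem hyperationRec_zero : hyperationRec F ρ 0 = supBelow F (ω ^ ρ) 0 :=
  limitRecOn_zero ..

theorem hyperationRec_add_one (α : Ordinal) :
    hyperationRec F ρ (α + 1) = supBelow F (ω ^ ρ) (hyperationRec F ρ α + 1) :=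
  limitRecOn_add_one ..

theorem hyperationRec_of_isSuccLimit {l : Ordinal} (hl : IsSuccLimit l) :
    hyperationRec F ρ l = ⨆ β : Iio l, hyperationRec F ρ β.1 :=
  limitRecOn_limit _ _ _ _ hl

variable {F ρ}

theorem WeakHyperation.hyperationRec_le (hF : WeakHyperation f F) (α : Ordinal) :
    hyperationRec F ρ α ≤ F (ω ^ ρ) α := by
  induction α using limitRecOn with
  | zero => rw [hyperationRec_zero]; exact hF.supBelow_le zero_le
  | add_one α ih =>
    rw [hyperationRec_add_one]
    refine hF.supBelow_le ?_
    rw [← succ_eq_add_one, ← succ_eq_add_one, succ_le_iff]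
    exact ih.trans_lt ((hF.isNormal _).strictMono (lt_succ α))
  | limit l hl ih =>
    rw [hyperationRec_of_isSuccLimit F ρ hl]
    exact ciSup_le' fun β => (ih β.1 β.2).trans ((hF.isNormal _).monotone β.2.le)

theorem WeakHyperation.isNormal_hyperationRec (hF : WeakHyperation f F) :
    IsNormal (hyperationRec F ρ) := by
  refine IsNormal.of_succ_lt (fun α => ?_) (fun {l} hl => ?_)
  · rw [succ_eq_add_one, hyperationRec_add_one]
    exact (lt_add_one _).trans_le (hF.le_supBelow ρ _)
  · have : Nonempty (Iio l) := ⟨⟨0, hl.pos⟩⟩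
    rw [hyperationRec_of_isSuccLimit F ρ hl, image_eq_range]
    exact isLUB_ciSup bddAbove_of_small

theorem WeakHyperation.apply_hyperationRec (hF : WeakHyperation f F) {ζ : Ordinal}
    (hζ : ζ < ω ^ ρ) (α : Ordinal) : F ζ (hyperationRec F ρ α) = hyperationRec F ρ α := by
  induction α using limitRecOn with
  | zero => rw [hyperationRec_zero]; exact hF.apply_supBelow hζ 0
  | add_one α _ => rw [hyperationRec_add_one]; exact hF.apply_supBelow hζ _
  | limit l hl ih =>
    have : Nonempty (Iio l) := ⟨⟨0, hl.pos⟩⟩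
    rw [hyperationRec_of_isSuccLimit F ρ hl,
      (hF.isNormal ζ).map_iSup bddAbove_of_small]
    exact iSup_congr fun β => ih β.1 β.2

theorem WeakHyperation.hyperationRec_apply_of_lt (hF : WeakHyperation f F) {σ : Ordinal}
    (hρσ : ρ < σ) (x : Ordinal) : hyperationRec F ρ (F (ω ^ σ) x) = F (ω ^ σ) x := by
  refine le_antisymm ?_ hF.isNormal_hyperationRec.strictMono.le_apply
  calc hyperationRec F ρ (F (ω ^ σ) x) ≤ F (ω ^ ρ) (F (ω ^ σ) x) := hF.hyperationRec_le _
    _ = F (ω ^ σ) x :=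
      congrFun (hF.comp_of_lt_opow ((opow_lt_opow_iff_right one_lt_omega0).2 hρσ)) x

theorem WeakHyperation.cantorComp_update_hyperationRec (hF : WeakHyperation f F)
    (hρ : ρ ≠ 0) :
    WeakHyperation f
      (cantorComp (Function.update (fun σ => F (ω ^ σ)) ρ (hyperationRec F ρ))) := by
  set Q := Function.update (fun σ => F (ω ^ σ)) ρ (hyperationRec F ρ)
  have hQ : ∀ σ, σ ≠ ρ → Q σ = F (ω ^ σ) := fun σ hσ => Function.update_of_ne hσ _ _
  have hQρ : Q ρ = hyperationRec F ρ := Function.update_self ..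
  have hQ0 : Q 0 = f := by rw [hQ 0 hρ.symm, opow_zero, hF.map_one]
  rw [← hQ0]
  refine weakHyperation_cantorComp (fun σ => ?_) (fun τ σ hτσ => ?_)
  · rcases eq_or_ne σ ρ with rfl | hσ
    · exact hQρ ▸ hF.isNormal_hyperationRec
    · exact hQ σ hσ ▸ hF.isNormal _
  · have hτ : ω ^ τ < ω ^ σ := (opow_lt_opow_iff_right one_lt_omega0).2 hτσ
    rcases eq_or_ne σ ρ with rfl | hσ
    · rw [hQρ, hQ τ hτσ.ne]
      exact funext (hF.apply_hyperationRec hτ)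
    rcases eq_or_ne τ ρ with rfl | hτρ
    · rw [hQρ, hQ σ hσ]
      exact funext (hF.hyperationRec_apply_of_lt hτσ)
    · rw [hQ σ hσ, hQ τ hτρ]
      exact hF.comp_of_lt_opow hτ

theorem IsHyperation.apply_opow_eq_hyperationRec (hF : IsHyperation f F) (hρ : ρ ≠ 0) :
    F (ω ^ ρ) = hyperationRec F ρ := by
  funext x
  refine le_antisymm ?_ (hF.1.hyperationRec_le x)
  simpa using hF.2 _ (hF.1.cantorComp_update_hyperationRec hρ) (ω ^ ρ) x

end Hyperation

theorem hyperation_recursion_general (f : Ordinal → Ordinal)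
    (F : Ordinal → Ordinal → Ordinal) (hF : IsHyperation f F) :
    ∀ ρ : Ordinal, 0 < ρ →
      (F (Ordinal.omega0 ^ ρ) 0 = ⨆ ζ : Set.Iio (Ordinal.omega0 ^ ρ), F ζ.1 0) ∧
      (∀ ξ : Ordinal, F (Ordinal.omega0 ^ ρ) (ξ + 1) =
        ⨆ ζ : Set.Iio (Ordinal.omega0 ^ ρ), F ζ.1 (F (Ordinal.omega0 ^ ρ) ξ + 1)) ∧
      (∀ l : Ordinal, Order.IsSuccLimit l →
        F (Ordinal.omega0 ^ ρ) l = ⨆ ξ : Set.Iio l, F (Ordinal.omega0 ^ ρ) ξ.1) := by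
  intro ρ hρ
  have hFρ := hF.apply_opow_eq_hyperationRec hρ.ne'
  refine ⟨?_, fun ξ => ?_, fun l hl => (hF.1.isNormal _).apply_of_isSuccLimit hl⟩
  · rw [hFρ]
    exact hyperationRec_zero F ρ
  · rw [hFρ]
    exact hyperationRec_add_one F ρ ξ

theorem hyperation_recursion (f : Ordinal → Ordinal) (hf : Order.IsNormal f)
    (F : Ordinal → Ordinal → Ordinal) (hF : IsHyperation f F) :
    ∀ ρ : Ordinal, 0 < ρ →
      (F (Ordinal.omega0 ^ ρ) 0 = ⨆ ζ : Set.Iio (Ordinal.omega0 ^ ρ), F ζ.1 0) ∧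
      (∀ ξ : Ordinal, F (Ordinal.omega0 ^ ρ) (ξ + 1) =
        ⨆ ζ : Set.Iio (Ordinal.omega0 ^ ρ), F ζ.1 (F (Ordinal.omega0 ^ ρ) ξ + 1)) ∧
      (∀ l : Ordinal, Order.IsSuccLimit l →
        F (Ordinal.omega0 ^ ρ) l = ⨆ ξ : Set.Iio l, F (Ordinal.omega0 ^ ρ) ξ.1) :=
  hyperation_recursion_general f F hF
end

section
/- Let f be a normal function with hyperation F, let ξ be an ordinal, and let G be the hyperation of the normal function F ξ. Then for every ordinal ζ, G ζ = F (ξ * ζ), where ξ * ζ is ordinal multiplication. -/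
open Ordinal

/-! The family `ζ ↦ F (ξ * ζ)` is a weak hyperation of `F ξ`; the work is its minimality,
`F (ξ * ζ) ≤ G ζ` for every weak hyperation `G` of `F ξ`, by induction
on `ζ`. A decomposable `ζ = a + b` is handled by composing the two inductive bounds. For an
additively principal `ζ > 1`, put `γ = ξ * ζ`, again principal. The inductive hypothesis shows that
every `F δ` with `δ < γ` fixes the values of `G ζ`, and then writing `η = γ * q + r` with `r < γ`,
the family `η ↦ G (ζ * q) ∘ F r` is a weak hyperation of `f`; minimality of `F` at `η = γ` gives
`F γ ≤ G ζ`. -/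

theorem Ordinal.mul_add_div_of_lt {γ r : Ordinal} (q : Ordinal) (hr : r < γ) :
    (γ * q + r) / γ = q := by
  rw [mul_add_div _ hr.ne_bot, div_eq_zero_of_lt hr, add_zero]

theorem Ordinal.mul_add_mod_of_lt {γ r : Ordinal} (q : Ordinal) (hr : r < γ) :
    (γ * q + r) % γ = r := by
  rw [mul_add_mod_self, mod_eq_of_lt hr]

namespace WeakHyperation

variable {f g : Ordinal → Ordinal} {F H : Ordinal → Ordinal → Ordinal}

theorem le_apply (hF : WeakHyperation f F) (ξ α : Ordinal) : α ≤ F ξ α :=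
  (hF.1 ξ).strictMono.le_apply

theorem apply_add (hF : WeakHyperation f F) (ξ ζ α : Ordinal) : F (ξ + ζ) α = F ξ (F ζ α) := by
  rw [hF.2.2.2]
  rfl

theorem apply_le_apply_of_le_s6 (hF : WeakHyperation f F) {a b : Ordinal} (hab : a ≤ b)
    (α : Ordinal) : F a α ≤ F b α := by
  rw [← Ordinal.add_sub_cancel_of_le hab, hF.apply_add]
  exact (hF.1 a).monotone (hF.le_apply _ α)

theorem mul_left (hF : WeakHyperation f F) (ξ : Ordinal) :
    WeakHyperation (F ξ) fun ζ => F (ξ * ζ) := by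
  obtain ⟨hnormal, h0, -, hadd⟩ := hF
  refine ⟨fun ζ => hnormal _, ?_, ?_, fun a b => ?_⟩ <;> simp only [mul_zero, mul_one, mul_add]
  exacts [h0, hadd _ _]

theorem comp_div_mod (hF : WeakHyperation f F) (hH : WeakHyperation g H) {γ : Ordinal}
    (hγ : IsPrincipal (· + ·) γ) (hγ1 : 1 < γ) (hfix : ∀ δ < γ, F δ ∘ g = g) :
    WeakHyperation f fun η => H (η / γ) ∘ F (η % γ) := by
  have hγ0 : γ ≠ 0 := (zero_lt_one.trans hγ1).ne'
  have hfixH : ∀ δ < γ, ∀ p β, F δ (H (1 + p) β) = H (1 + p) β := by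
    intro δ hδ p β
    rw [hH.apply_add, hH.2.2.1]
    exact congrFun (hfix δ hδ) _
  refine ⟨fun η => (hH.1 _).comp (hF.1 _), ?_, ?_, fun η η' => ?_⟩
  · dsimp only
    rw [zero_div, zero_mod, hH.2.1, hF.2.1]
    rfl
  · dsimp only
    rw [div_eq_zero_of_lt hγ1, mod_eq_of_lt hγ1, hH.2.1, hF.2.2.1]
    rfl
  obtain ⟨q, r, hr, rfl⟩ : ∃ q r, r < γ ∧ η = γ * q + r :=
    ⟨_, _, mod_lt η hγ0, (div_add_mod η γ).symm⟩
  obtain ⟨q', r', hr', rfl⟩ : ∃ q r, r < γ ∧ η' = γ * q + r :=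
    ⟨_, _, mod_lt η' hγ0, (div_add_mod η' γ).symm⟩
  funext α
  simp only [Function.comp_apply, mul_add_div_of_lt _ hr, mul_add_mod_of_lt _ hr,
    mul_add_div_of_lt _ hr', mul_add_mod_of_lt _ hr']
  rcases eq_or_ne q' 0 with rfl | hq'
  · rw [mul_zero, zero_add, add_assoc, mul_add_div_of_lt _ (hγ hr hr'),
      mul_add_mod_of_lt _ (hγ hr hr'), hH.2.1, hF.apply_add]
    rfl
  obtain ⟨p, rfl⟩ : ∃ p, q' = 1 + p :=
    ⟨q' - 1, (Ordinal.add_sub_cancel_of_le (Order.one_le_iff_ne_zero.2 hq')).symm⟩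
  have hsum : γ * q + r + (γ * (1 + p) + r') = γ * (q + (1 + p)) + r' := by
    rw [mul_add, mul_add, mul_add, mul_one]
    calc γ * q + r + (γ + γ * p + r') = γ * q + (r + γ) + γ * p + r' := by
          simp only [add_assoc]
      _ = γ * q + (γ + γ * p) + r' := by rw [hγ.add_eq_right hr, add_assoc (γ * q)]
  rw [hsum, mul_add_div_of_lt _ hr', mul_add_mod_of_lt _ hr', hH.apply_add, hfixH r hr]

end WeakHyperation

namespace IsHyperation

variable {f : Ordinal → Ordinal} {F G : Ordinal → Ordinal → Ordinal} {ξ : Ordinal}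

theorem unique (hF : IsHyperation f F) (hG : IsHyperation f G) : F = G :=
  funext fun ξ => funext fun ζ => le_antisymm (hF.2 G hG.1 ξ ζ) (hG.2 F hF.1 ξ ζ)

theorem apply_mul_le_of_isPrincipal_add (hF : IsHyperation f F) (hG : WeakHyperation (F ξ) G)
    (hξ : ξ ≠ 0) {ζ : Ordinal} (hζ : IsPrincipal (· + ·) ζ) (hζ1 : 1 < ζ)
    (ih : ∀ η < ζ, ∀ α, F (ξ * η) α ≤ G η α) (α : Ordinal) : F (ξ * ζ) α ≤ G ζ α := by
  have hγ : IsPrincipal (· + ·) (ξ * ζ) := isPrincipal_add_mul_of_isPrincipal_add ξ hζ1.ne' hζ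
  have hγ1 : 1 < ξ * ζ := hζ1.trans_le (le_mul_right ζ (pos_iff_ne_zero.2 hξ))
  have hfix : ∀ δ < ξ * ζ, F δ ∘ G ζ = G ζ := by
    intro δ hδ
    funext β
    obtain ⟨η, hη, hδη⟩ :=
      (lt_mul_iff_of_isSuccLimit (isSuccLimit_of_isPrincipal_add hζ1 hζ)).1 hδ
    refine le_antisymm ?_ (hF.1.le_apply δ _)
    calc F δ (G ζ β) ≤ F (ξ * η) (G ζ β) := hF.1.apply_le_apply_of_le_s6 hδη.le _
      _ ≤ G η (G ζ β) := ih η hη _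
      _ = G ζ β := by rw [← hG.apply_add, hζ.add_eq_right hη]
  have hmin := hF.2 _ (hF.1.comp_div_mod (hG.mul_left ζ) hγ hγ1 hfix) (ξ * ζ) α
  rwa [Function.comp_apply, div_self (zero_lt_one.trans hγ1).ne', mod_self, hF.1.2.1,
    mul_one] at hmin

theorem apply_mul_le (hF : IsHyperation f F) (hG : WeakHyperation (F ξ) G) (ζ α : Ordinal) :
    F (ξ * ζ) α ≤ G ζ α := by
  rcases eq_or_ne ξ 0 with rfl | hξ
  · rw [zero_mul, hF.1.2.1]
    exact hG.le_apply ζ α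
  induction ζ using WellFoundedLT.induction generalizing α with
  | ind ζ ih =>
  by_cases hζ : IsPrincipal (· + ·) ζ
  · rcases lt_or_ge 1 ζ with hζ1 | hζ1
    · exact hF.apply_mul_le_of_isPrincipal_add hG hξ hζ hζ1 ih α
    rcases Order.le_one_iff.1 hζ1 with rfl | rfl
    · rw [mul_zero, hF.1.2.1, hG.2.1]
    · rw [mul_one, hG.2.2.1]
  obtain ⟨a, ha, b, hb, rfl⟩ := exists_lt_add_of_not_isPrincipal_add hζ
  rw [mul_add, hF.1.apply_add, hG.apply_add]
  exact ((hF.1.1 _).monotone (ih b hb α)).trans (ih a ha _)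

theorem mul_left (hF : IsHyperation f F) (ξ : Ordinal) :
    IsHyperation (F ξ) fun ζ => F (ξ * ζ) :=
  ⟨hF.1.mul_left ξ, fun _ hG ζ α => hF.apply_mul_le hG ζ α⟩

end IsHyperation

theorem hyperation_of_hyperate_general (f : Ordinal → Ordinal)
    (F : Ordinal → Ordinal → Ordinal) (hF : IsHyperation f F)
    (ξ : Ordinal) (G : Ordinal → Ordinal → Ordinal) (hG : IsHyperation (F ξ) G) :
    ∀ ζ : Ordinal, G ζ = F (ξ * ζ) :=
  congrFun (hG.unique (hF.mul_left ξ))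

theorem hyperation_of_hyperate (f : Ordinal → Ordinal) (hf : Order.IsNormal f)
    (F : Ordinal → Ordinal → Ordinal) (hF : IsHyperation f F)
    (ξ : Ordinal) (G : Ordinal → Ordinal → Ordinal) (hG : IsHyperation (F ξ) G) :
    ∀ ζ : Ordinal, G ζ = F (ξ * ζ) :=
  hyperation_of_hyperate_general f F hF ξ G hG
end

section
/- Let f be a normal function with hyperation F. Then for every limit ordinal λ, the range of F (ω^λ) equals the intersection over all α < λ of the ranges of F (ω^α); i.e., Set.range (F (ω^λ)) = ⋂_{α<λ} Set.range (F (ω^α)). (This is the limit clause of the identification of the hyperates F (ω^α) with the α-th functions of the Veblen progression of f.) -/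
open Ordinal

/-!
Write `V` for the Veblen progression of `f`. Peeling off the leading term `ω ^ e` of the Cantor
normal form, `H (ω ^ e + ρ) = V e ∘ H ρ` for `ρ < ω ^ (e + 1)` defines a weak hyperation `H` of
`f` with `H (ω ^ α) = V α`, so minimality of the hyperation `F` gives `F (ω ^ α) ≤ V α`.
Conversely `ω ^ β + ω ^ α = ω ^ α` for `β < α`, so every value of `F (ω ^ α)` is a fixed point
of `F (ω ^ β)`; by induction on `α` this gives `range (F (ω ^ α)) ⊆ range (V α)`, hence
`V α ≤ F (ω ^ α)`. Thus `F (ω ^ α) = V α`, and at a limit `λ` the function `V λ` enumerates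
`⋂ α < λ, range (V α)`. The range of `F (ω ^ λ)` is also what shows that this intersection is
unbounded, so `V` is normal at limit stages although the ordinals indexing `F` may live in a
larger universe than its values.
-/

open Order Set Function

universe u v

theorem StrictMono.le_of_range_subset {g h : Ordinal.{u} → Ordinal.{u}} (hg : StrictMono g)
    (hh : StrictMono h) (hgh : range h ⊆ range g) (x : Ordinal) : g x ≤ h x := by
  simpa only [enumOrd_range hg, enumOrd_range hh] using
    enumOrd_le_of_subset hh.not_bddAbove_range_of_wellFoundedLT hgh x

namespace Ordinal

theorem sub_opow_log_lt {ξ : Ordinal} (h : ξ ≠ 0) : ξ - ω ^ log ω ξ < ξ := by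
  refine (Ordinal.sub_le_self _ _).lt_of_ne fun heq => ?_
  have hfix := Ordinal.add_sub_cancel_of_le (opow_log_le_self ω h)
  rw [heq, add_eq_right_iff_mul_omega0_le, ← opow_succ] at hfix
  exact (lt_opow_succ_log_self one_lt_omega0 ξ).not_ge hfix

theorem log_omega0_opow_add {e ρ : Ordinal} (hρ : ρ < ω ^ (e + 1)) : log ω (ω ^ e + ρ) = e :=
  (log_eq_iff one_lt_omega0 ((opow_pos e omega0_pos).trans_le le_self_add).ne' _).2
    ⟨le_self_add, isPrincipal_add_omega0_opow _
      ((opow_lt_opow_iff_right one_lt_omega0).2 (lt_add_one e)) hρ⟩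

end Ordinal

section

variable {f : Ordinal.{u} → Ordinal.{u}} {F : Ordinal.{v} → Ordinal.{u} → Ordinal.{u}}

namespace WeakHyperation

theorem isNormal_one (hW : WeakHyperation f F) : IsNormal f :=
  hW.2.2.1 ▸ hW.1 1

theorem apply_opow_of_lt (hW : WeakHyperation f F) {β α : Ordinal.{v}} (h : β < α)
    (x : Ordinal.{u}) : F (ω ^ β) (F (ω ^ α) x) = F (ω ^ α) x := by
  rw [← comp_apply (f := F _), ← hW.2.2.2,
    add_omega0_opow ((opow_lt_opow_iff_right one_lt_omega0).2 h)]

theorem range_opow_subset_of_lt (hW : WeakHyperation f F) {β α : Ordinal.{v}} (h : β < α) :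
    range (F (ω ^ α)) ⊆ range (F (ω ^ β)) := by
  rintro _ ⟨x, rfl⟩
  exact ⟨_, hW.apply_opow_of_lt h x⟩

end WeakHyperation

end

noncomputable def veblenProgression (f : Ordinal.{u} → Ordinal.{u}) (α : Ordinal.{v}) :
    Ordinal.{u} → Ordinal.{u} :=
  limitRecOn α f (fun _ g => deriv g) fun o _ ih => enumOrd (⋂ (β) (hβ : β < o), range (ih β hβ))

section VeblenProgression

variable (f : Ordinal.{u} → Ordinal.{u})

theorem veblenProgression_zero : veblenProgression f (0 : Ordinal.{v}) = f :=
  limitRecOn_zero ..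

theorem veblenProgression_add_one (α : Ordinal.{v}) :
    veblenProgression f (α + 1) = deriv (veblenProgression f α) :=
  limitRecOn_add_one ..

theorem veblenProgression_limit {o : Ordinal.{v}} (ho : IsSuccLimit o) :
    veblenProgression f o = enumOrd (⋂ β ∈ Iio o, range (veblenProgression f β)) :=
  limitRecOn_limit _ _ _ _ ho

variable {f} {F : Ordinal.{v} → Ordinal.{u} → Ordinal.{u}}

namespace WeakHyperation

theorem range_opow_subset_iInter_range_veblenProgression (hW : WeakHyperation f F)
    {o : Ordinal.{v}} (h : ∀ β < o, range (F (ω ^ β)) ⊆ range (veblenProgression f β)) :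
    range (F (ω ^ o)) ⊆ ⋂ β ∈ Iio o, range (veblenProgression f β) :=
  subset_iInter₂ fun β hβ => (hW.range_opow_subset_of_lt hβ).trans (h β hβ)

theorem not_bddAbove_iInter_range_veblenProgression (hW : WeakHyperation f F) {o : Ordinal.{v}}
    (h : ∀ β < o, range (F (ω ^ β)) ⊆ range (veblenProgression f β)) :
    ¬BddAbove (⋂ β ∈ Iio o, range (veblenProgression f β)) := fun hb =>
  (hW.1 _).strictMono.not_bddAbove_range_of_wellFoundedLT
    (hb.mono (hW.range_opow_subset_iInter_range_veblenProgression h))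

theorem isNormal_veblenProgression_and_range_subset (hW : WeakHyperation f F) (α : Ordinal.{v}) :
    IsNormal (veblenProgression f α) ∧ range (F (ω ^ α)) ⊆ range (veblenProgression f α) := by
  induction α using limitRecOn with
  | zero =>
    rw [veblenProgression_zero, opow_zero, hW.2.2.1]
    exact ⟨hW.isNormal_one, subset_rfl⟩
  | add_one β ih =>
    refine ⟨by rw [veblenProgression_add_one]; exact isNormal_deriv _, ?_⟩
    rintro _ ⟨x, rfl⟩
    rw [veblenProgression_add_one, mem_range_deriv ih.1]
    refine le_antisymm ?_ ih.1.strictMono.le_apply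
    calc veblenProgression f β (F (ω ^ (β + 1)) x)
        ≤ F (ω ^ β) (F (ω ^ (β + 1)) x) :=
          ih.1.strictMono.le_of_range_subset (hW.1 _).strictMono ih.2 _
      _ = F (ω ^ (β + 1)) x := hW.apply_opow_of_lt (lt_add_one β) x
  | limit o ho ih =>
    have hunb := hW.not_bddAbove_iInter_range_veblenProgression fun β hβ => (ih β hβ).2
    rw [veblenProgression_limit f ho, range_enumOrd hunb]
    refine ⟨isNormal_enumOrd (fun t ht hne hbdd => ?_) hunb,
      hW.range_opow_subset_iInter_range_veblenProgression fun β hβ => (ih β hβ).2⟩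
    refine mem_iInter₂.2 fun β hβ => dirSupClosed_iff_of_linearOrder.1
      (ih β hβ).1.dirSupClosed_range (ht.trans (biInter_subset_of_mem hβ)) hne
      (isLUB_csSup hne hbdd)

theorem isNormal_veblenProgression (hW : WeakHyperation f F) (α : Ordinal.{v}) :
    IsNormal (veblenProgression f α) :=
  (hW.isNormal_veblenProgression_and_range_subset α).1

theorem range_opow_subset_range_veblenProgression (hW : WeakHyperation f F) (α : Ordinal.{v}) :
    range (F (ω ^ α)) ⊆ range (veblenProgression f α) :=
  (hW.isNormal_veblenProgression_and_range_subset α).2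

theorem veblenProgression_le (hW : WeakHyperation f F) (α : Ordinal.{v}) (x : Ordinal.{u}) :
    veblenProgression f α x ≤ F (ω ^ α) x :=
  (hW.isNormal_veblenProgression α).strictMono.le_of_range_subset (hW.1 _).strictMono
    (hW.range_opow_subset_range_veblenProgression α) x

theorem range_veblenProgression_limit (hW : WeakHyperation f F) {o : Ordinal.{v}}
    (ho : IsSuccLimit o) :
    range (veblenProgression f o) = ⋂ β ∈ Iio o, range (veblenProgression f β) := by
  rw [veblenProgression_limit f ho, range_enumOrd (hW.not_bddAbove_iInter_range_veblenProgression
    fun β _ => hW.range_opow_subset_range_veblenProgression β)]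

theorem range_veblenProgression_anti (hW : WeakHyperation f F) {η α : Ordinal.{v}} (h : η ≤ α) :
    range (veblenProgression f α) ⊆ range (veblenProgression f η) := by
  induction α using limitRecOn with
  | zero => rw [nonpos_iff_eq_zero.1 h]
  | add_one β ih =>
    rcases h.lt_or_eq with h | rfl
    · refine Subset.trans ?_ (ih (lt_add_one_iff.1 h))
      rintro _ ⟨x, rfl⟩
      rw [veblenProgression_add_one]
      exact ⟨_, deriv_fp (hW.isNormal_veblenProgression β) x⟩
    · exact subset_rfl
  | limit o ho _ =>
    rcases h.lt_or_eq with h | rfl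
    · rw [hW.range_veblenProgression_limit ho]
      exact biInter_subset_of_mem h
    · exact subset_rfl

theorem veblenProgression_apply_of_lt (hW : WeakHyperation f F) {η α : Ordinal.{v}} (h : η < α)
    (x : Ordinal.{u}) :
    veblenProgression f η (veblenProgression f α x) = veblenProgression f α x := by
  obtain ⟨y, hy⟩ := hW.range_veblenProgression_anti (add_one_le_of_lt h) ⟨x, rfl⟩
  rw [← hy, veblenProgression_add_one]
  exact deriv_fp (hW.isNormal_veblenProgression η) y

end WeakHyperation

end VeblenProgression

noncomputable def veblenHyperation (f : Ordinal.{u} → Ordinal.{u}) (ξ : Ordinal.{v}) :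
    Ordinal.{u} → Ordinal.{u} :=
  if _ : ξ = 0 then id
  else veblenProgression f (log ω ξ) ∘ veblenHyperation f (ξ - ω ^ log ω ξ)
termination_by ξ
decreasing_by exact sub_opow_log_lt ‹_›

section VeblenHyperation

variable (f : Ordinal.{u} → Ordinal.{u})

theorem veblenHyperation_zero : veblenHyperation f (0 : Ordinal.{v}) = id := by
  rw [veblenHyperation, dif_pos rfl]

theorem veblenHyperation_of_ne_zero {ξ : Ordinal.{v}} (h : ξ ≠ 0) :
    veblenHyperation f ξ =
      veblenProgression f (log ω ξ) ∘ veblenHyperation f (ξ - ω ^ log ω ξ) := by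
  rw [veblenHyperation, dif_neg h]

theorem veblenHyperation_opow_add {e ρ : Ordinal.{v}} (hρ : ρ < ω ^ (e + 1)) :
    veblenHyperation f (ω ^ e + ρ) = veblenProgression f e ∘ veblenHyperation f ρ := by
  rw [veblenHyperation_of_ne_zero f ((opow_pos e omega0_pos).trans_le le_self_add).ne',
    log_omega0_opow_add hρ, Ordinal.add_sub_cancel]

theorem veblenHyperation_opow (e : Ordinal.{v}) :
    veblenHyperation f (ω ^ e) = veblenProgression f e := by
  simpa only [add_zero, veblenHyperation_zero, comp_id] using
    veblenHyperation_opow_add f (opow_pos (e + 1) omega0_pos)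

theorem veblenHyperation_one : veblenHyperation f (1 : Ordinal.{v}) = f := by
  simpa only [opow_zero, veblenProgression_zero] using veblenHyperation_opow f (0 : Ordinal.{v})

variable {f} {F : Ordinal.{v} → Ordinal.{u} → Ordinal.{u}}

namespace WeakHyperation

theorem isNormal_veblenHyperation (hW : WeakHyperation f F) (ξ : Ordinal.{v}) :
    IsNormal (veblenHyperation f ξ) := by
  induction ξ using WellFoundedLT.induction with | ind ξ ih
  rcases eq_or_ne ξ 0 with rfl | hξ
  · rw [veblenHyperation_zero]
    exact IsNormal.id
  · rw [veblenHyperation_of_ne_zero f hξ]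
    exact (hW.isNormal_veblenProgression _).comp (ih _ (sub_opow_log_lt hξ))

theorem veblenHyperation_apply_veblenProgression (hW : WeakHyperation f F) {ξ e : Ordinal.{v}}
    (h : ξ < ω ^ e) (x : Ordinal.{u}) :
    veblenHyperation f ξ (veblenProgression f e x) = veblenProgression f e x := by
  induction ξ using WellFoundedLT.induction with | ind ξ ih
  rcases eq_or_ne ξ 0 with rfl | hξ
  · rw [veblenHyperation_zero, id]
  · rw [veblenHyperation_of_ne_zero f hξ, comp_apply,
      ih _ (sub_opow_log_lt hξ) ((sub_opow_log_lt hξ).trans h),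
      hW.veblenProgression_apply_of_lt ((lt_opow_iff_log_lt one_lt_omega0 hξ).1 h)]

theorem veblenHyperation_comp_of_lt (hW : WeakHyperation f F) {ξ ζ e : Ordinal.{v}}
    (hξ : ξ < ω ^ e) (hζ : ω ^ e ≤ ζ) :
    veblenHyperation f ξ ∘ veblenHyperation f ζ = veblenHyperation f ζ := by
  have hζ0 : ζ ≠ 0 := ((opow_pos e omega0_pos).trans_le hζ).ne'
  have hlog : ξ < ω ^ log ω ζ := hξ.trans_le <| opow_le_opow_right omega0_pos <|
    (opow_le_iff_le_log one_lt_omega0 hζ0).1 hζ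
  ext x
  rw [veblenHyperation_of_ne_zero f hζ0, comp_apply, comp_apply,
    hW.veblenHyperation_apply_veblenProgression hlog]

theorem veblenHyperation_add (hW : WeakHyperation f F) (ξ ζ : Ordinal.{v}) :
    veblenHyperation f (ξ + ζ) = veblenHyperation f ξ ∘ veblenHyperation f ζ := by
  induction ξ using WellFoundedLT.induction generalizing ζ with | ind ξ ih
  rcases eq_or_ne ξ 0 with rfl | hξ
  · rw [zero_add, veblenHyperation_zero, id_comp]
  set e := log ω ξ
  have hρ : ξ - ω ^ e < ω ^ (e + 1) :=
    (Ordinal.sub_le_self _ _).trans_lt (lt_opow_succ_log_self one_lt_omega0 ξ)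
  rcases lt_or_ge ζ (ω ^ (e + 1)) with hζ | hζ
  · rw [← Ordinal.add_sub_cancel_of_le (opow_log_le_self ω hξ), add_assoc,
      veblenHyperation_opow_add f (isPrincipal_add_omega0_opow _ hρ hζ),
      veblenHyperation_opow_add f hρ, ih _ (sub_opow_log_lt hξ), comp_assoc]
  · have hξ' := lt_opow_succ_log_self one_lt_omega0 ξ
    rw [add_of_omega0_opow_le hξ' hζ, hW.veblenHyperation_comp_of_lt hξ' hζ]

theorem weakHyperation_veblenHyperation (hW : WeakHyperation f F) :
    WeakHyperation f (veblenHyperation f : Ordinal.{v} → Ordinal.{u} → Ordinal.{u}) :=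
  ⟨hW.isNormal_veblenHyperation, veblenHyperation_zero f, veblenHyperation_one f,
    hW.veblenHyperation_add⟩

end WeakHyperation

end VeblenHyperation

theorem hyperation_limit_veblen_general (f : Ordinal → Ordinal)
    (F : Ordinal → Ordinal → Ordinal) (hF : IsHyperation f F) :
    ∀ l : Ordinal, Order.IsSuccLimit l →
      Set.range (F (Ordinal.omega0 ^ l)) =
        ⋂ α ∈ Set.Iio l, Set.range (F (Ordinal.omega0 ^ α)) := by
  intro l hl
  obtain ⟨hW, hmin⟩ := hF
  have hFV : ∀ α, F (ω ^ α) = veblenProgression f α := fun α => funext fun x =>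
    le_antisymm (veblenHyperation_opow f α ▸ hmin _ hW.weakHyperation_veblenHyperation _ x)
      (hW.veblenProgression_le α x)
  simp only [hFV]
  exact hW.range_veblenProgression_limit hl

theorem hyperation_limit_veblen (f : Ordinal → Ordinal) (hf : Order.IsNormal f)
    (F : Ordinal → Ordinal → Ordinal) (hF : IsHyperation f F) :
    ∀ l : Ordinal, Order.IsSuccLimit l →
      Set.range (F (Ordinal.omega0 ^ l)) =
        ⋂ α ∈ Set.Iio l, Set.range (F (Ordinal.omega0 ^ α)) :=
  hyperation_limit_veblen_general f F hF
end

section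
/- Let f be a normal function with hyperation F, and let g be any weak hyperation of f such that g (ω^α) = F (ω^α) for every ordinal α. Then g = F, i.e., g ξ = F ξ for every ordinal ξ. (In the paper's formulation: a weak hyperation of f whose ω^α-th members coincide with the Veblen progression of f is the hyperation of f.) -/
open Ordinal

/-! Every nonzero ordinal is `ω ^ α + η` with `η` strictly smaller, so an additive family
`ξ ↦ g ξ` (turning ordinal addition into composition) is determined by its value at `0` and
at the powers of `ω`. Weak hyperations are such families. -/

namespace Ordinal

/- Take `α = log ω ξ`; the remainder is smaller because `ω ^ α * ω > ξ` means `ξ` does not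
absorb `ω ^ α` on the left. -/
theorem exists_omega0_opow_add_lt {ξ : Ordinal} (hξ : ξ ≠ 0) :
    ∃ α η : Ordinal, ω ^ α + η = ξ ∧ η < ξ := by
  have hle : ω ^ log ω ξ ≤ ξ := opow_log_le_self ω hξ
  refine ⟨log ω ξ, ξ - ω ^ log ω ξ, Ordinal.add_sub_cancel_of_le hle, ?_⟩
  rw [sub_lt_of_le hle, ← not_le, add_le_right_iff_mul_omega0_le, ← opow_succ, not_le]
  exact lt_opow_succ_log_self one_lt_omega0 ξ

theorem eq_of_map_add_of_eq_omega0_opow {β : Type*} {g G : Ordinal → β → β}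
    (hg : ∀ ξ ζ, g (ξ + ζ) = g ξ ∘ g ζ) (hG : ∀ ξ ζ, G (ξ + ζ) = G ξ ∘ G ζ)
    (h0 : g 0 = G 0) (hω : ∀ α : Ordinal, g (ω ^ α) = G (ω ^ α)) (ξ : Ordinal) : g ξ = G ξ := by
  induction ξ using WellFoundedLT.induction with
  | ind ξ ih =>
    rcases eq_or_ne ξ 0 with rfl | hξ
    · exact h0
    · obtain ⟨α, η, rfl, hη⟩ := exists_omega0_opow_add_lt hξ
      rw [hg, hG, hω, ih η hη]

end Ordinal

theorem veblen_determines_hyperation_general (f : Ordinal → Ordinal)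
    (F : Ordinal → Ordinal → Ordinal) (hF : IsHyperation f F)
    (g : Ordinal → Ordinal → Ordinal) (hg : WeakHyperation f g)
    (hveb : ∀ α : Ordinal, g (Ordinal.omega0 ^ α) = F (Ordinal.omega0 ^ α)) :
    ∀ ξ : Ordinal, g ξ = F ξ := by
  obtain ⟨-, hg0, -, hgadd⟩ := hg
  obtain ⟨⟨-, hF0, -, hFadd⟩, -⟩ := hF
  exact Ordinal.eq_of_map_add_of_eq_omega0_opow hgadd hFadd (hg0.trans hF0.symm) hveb

theorem veblen_determines_hyperation (f : Ordinal → Ordinal) (hf : Order.IsNormal f)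
    (F : Ordinal → Ordinal → Ordinal) (hF : IsHyperation f F)
    (g : Ordinal → Ordinal → Ordinal) (hg : WeakHyperation f g)
    (hveb : ∀ α : Ordinal, g (Ordinal.omega0 ^ α) = F (Ordinal.omega0 ^ α)) :
    ∀ ξ : Ordinal, g ξ = F ξ :=
  veblen_determines_hyperation_general f F hF g hg hveb
end

section
/- Let g be a weak cohyperation of an initial function f. Then: (1) if ξ < ζ then g ζ α ≤ g ξ α for every ordinal α; (2) if ξ + ζ = ζ then g ζ α = g ζ (g ξ α) for every ordinal α. -/
open Ordinal

/-!
An initial function never moves an ordinal up: if `α < g α`, then `α` lies in the initial segment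
`g '' [0, α]`, hence `α = g x` with `x ≤ α`, which the induction hypothesis rules out. Since
`g ζ = g (ζ - ξ) ∘ g ξ` for `ξ ≤ ζ`, this makes `ξ ↦ g ξ α` antitone.
-/

theorem Initial.apply_le {g : Ordinal → Ordinal} (hg : Initial g) (α : Ordinal) : g α ≤ α := by
  induction α using WellFoundedLT.induction with
  | _ α ih =>
    by_contra! hlt
    obtain ⟨γ, hγ⟩ := hg (Order.succ α)
    have hgα : g α < γ := by
      change g α ∈ {x | x < γ}
      rw [← hγ]
      exact ⟨α, Order.lt_succ α, rfl⟩
    have hα : α ∈ g '' {x | x < Order.succ α} := hγ ▸ hlt.trans hgα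
    obtain ⟨x, hx : x < Order.succ α, hgx⟩ := hα
    rcases (Order.le_of_lt_succ hx).lt_or_eq with hxα | rfl
    · exact (hgx ▸ ih x hxα).not_gt hxα
    · exact hlt.ne' hgx

namespace WeakCohyperation

variable {f : Ordinal → Ordinal} {g : Ordinal → Ordinal → Ordinal}

theorem apply_add (hg : WeakCohyperation f g) (ξ ζ α : Ordinal) :
    g (ξ + ζ) α = g ζ (g ξ α) :=
  congrFun (hg.2.2.2 ξ ζ) α

theorem apply_le_apply_of_le (hg : WeakCohyperation f g) {ξ ζ : Ordinal} (h : ξ ≤ ζ)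
    (α : Ordinal) : g ζ α ≤ g ξ α :=
  calc g ζ α = g (ζ - ξ) (g ξ α) := by rw [← hg.apply_add, Ordinal.add_sub_cancel_of_le h]
    _ ≤ g ξ α := (hg.1 _).apply_le _

theorem apply_apply_of_add_eq (hg : WeakCohyperation f g) {ξ ζ : Ordinal} (h : ξ + ζ = ζ)
    (α : Ordinal) : g ζ (g ξ α) = g ζ α := by
  rw [← hg.apply_add, h]

end WeakCohyperation

theorem weakCohyperation_properties_general (f : Ordinal → Ordinal)
    (g : Ordinal → Ordinal → Ordinal) (hg : WeakCohyperation f g) :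
    (∀ ξ ζ α : Ordinal, ξ < ζ → g ζ α ≤ g ξ α) ∧
    (∀ ξ ζ α : Ordinal, ξ + ζ = ζ → g ζ α = g ζ (g ξ α)) :=
  ⟨fun _ _ α h => hg.apply_le_apply_of_le h.le α,
    fun _ _ α h => (hg.apply_apply_of_add_eq h α).symm⟩

theorem weakCohyperation_properties (f : Ordinal → Ordinal) (hf : Initial f)
    (g : Ordinal → Ordinal → Ordinal) (hg : WeakCohyperation f g) :
    (∀ ξ ζ α : Ordinal, ξ < ζ → g ζ α ≤ g ξ α) ∧
    (∀ ξ ζ α : Ordinal, ξ + ζ = ζ → g ζ α = g ζ (g ξ α)) :=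
  weakCohyperation_properties_general f g hg
end

section
/- Let g be an initial function with cohyperation G, and let f : Ordinal → Ordinal be any function. Then the following are equivalent: (1) f (ξ + ζ) = G ζ (f ξ) for all ordinals ξ, ζ (f is g-exact); (2) f ξ = G ξ (f 0) for every ordinal ξ; (3) for every ordinal ζ > 0 there exists ξ < ζ such that f ζ = G (ζ - ξ) (f ξ), where ζ - ξ denotes the unique ordinal η with ξ + η = ζ. -/
open Ordinal

/-! `ξ ↦ G ξ` is a right action of ordinal addition on the ordinals, and (2) says that `f` is the
orbit map of `f 0`, which makes (1) ⇔ (2) immediate. Condition (3) reaches `f ζ` from some earlier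
`f ξ` along the action, so (3) ⇒ (2) is well-founded induction on `ζ`, using `ξ + (ζ - ξ) = ζ`. -/

section RightAction

variable {G : Ordinal → Ordinal → Ordinal} {f : Ordinal → Ordinal}

theorem eq_apply_zero_of_add (h : ∀ ξ ζ : Ordinal, f (ξ + ζ) = G ζ (f ξ)) (ξ : Ordinal) :
    f ξ = G ξ (f 0) := by
  simpa only [zero_add] using h 0 ξ

theorem add_of_eq_apply_zero (hadd : ∀ ξ ζ : Ordinal, G (ξ + ζ) = G ζ ∘ G ξ)
    (h : ∀ ξ : Ordinal, f ξ = G ξ (f 0)) (ξ ζ : Ordinal) : f (ξ + ζ) = G ζ (f ξ) := by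
  rw [h (ξ + ζ), h ξ, hadd, Function.comp_apply]

theorem exists_lt_of_eq_apply_zero (h0 : G 0 = id) (h : ∀ ξ : Ordinal, f ξ = G ξ (f 0))
    (ζ : Ordinal) (hζ : 0 < ζ) : ∃ ξ < ζ, f ζ = G (ζ - ξ) (f ξ) :=
  ⟨0, hζ, by rw [Ordinal.sub_zero, h ζ, h 0, h0, id]⟩

theorem eq_apply_zero_of_exists_lt (h0 : G 0 = id) (hadd : ∀ ξ ζ : Ordinal, G (ξ + ζ) = G ζ ∘ G ξ)
    (h : ∀ ζ : Ordinal, 0 < ζ → ∃ ξ < ζ, f ζ = G (ζ - ξ) (f ξ)) (ζ : Ordinal) :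
    f ζ = G ζ (f 0) := by
  induction ζ using WellFoundedLT.induction with
  | _ ζ IH =>
    rcases eq_zero_or_pos ζ with rfl | hζ
    · rw [h0, id]
    · obtain ⟨ξ, hξζ, hfζ⟩ := h ζ hζ
      calc f ζ = G (ζ - ξ) (G ξ (f 0)) := by rw [hfζ, IH ξ hξζ]
        _ = G (ξ + (ζ - ξ)) (f 0) := by rw [hadd, Function.comp_apply]
        _ = G ζ (f 0) := by rw [Ordinal.add_sub_cancel_of_le hξζ.le]

end RightAction

theorem exact_tfae_general (g : Ordinal → Ordinal)
    (G : Ordinal → Ordinal → Ordinal) (hG : IsCohyperation g G)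
    (f : Ordinal → Ordinal) :
    ((∀ ξ ζ : Ordinal, f (ξ + ζ) = G ζ (f ξ)) ↔ (∀ ξ : Ordinal, f ξ = G ξ (f 0))) ∧
    ((∀ ξ : Ordinal, f ξ = G ξ (f 0)) ↔
      (∀ ζ : Ordinal, 0 < ζ → ∃ ξ : Ordinal, ξ < ζ ∧ f ζ = G (ζ - ξ) (f ξ))) := by
  obtain ⟨⟨-, h0, -, hadd⟩, -⟩ := hG
  exact ⟨⟨eq_apply_zero_of_add, add_of_eq_apply_zero hadd⟩,
    ⟨exists_lt_of_eq_apply_zero h0, eq_apply_zero_of_exists_lt h0 hadd⟩⟩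

theorem exact_tfae (g : Ordinal → Ordinal) (hg : Initial g)
    (G : Ordinal → Ordinal → Ordinal) (hG : IsCohyperation g G)
    (f : Ordinal → Ordinal) :
    ((∀ ξ ζ : Ordinal, f (ξ + ζ) = G ζ (f ξ)) ↔ (∀ ξ : Ordinal, f ξ = G ξ (f 0))) ∧
    ((∀ ξ : Ordinal, f ξ = G ξ (f 0)) ↔
      (∀ ζ : Ordinal, 0 < ζ → ∃ ξ : Ordinal, ξ < ζ ∧ f ζ = G (ζ - ξ) (f ξ))) :=
  exact_tfae_general g G hG f
end
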